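/- Let ψ : g_{η²} → D be the Lie algebra isomorphism onto the double D(sl(2,ℝ)) determined by ψ(J)=−(1/2)(X₁−X₂), ψ(K₁)=(1/2)(X₁+X₂), ψ(K₂)=−(1/2)X₀, ψ(P₀)=−(η/2)(X₁+X₂)+x¹−x², ψ(P₁)=2x⁰, ψ(P₂)=(η/2)(X₁−X₂)+x¹+x². Then (ψ⊗ψ)( η J∧K₁ + (1/2)(J∧P₀ + K₂∧P₁ − K₁∧P₂) ) = (1/2) Σ_{i=0}^{2} ( xⁱ⊗X_i − X_i⊗xⁱ ), i.e. the change of basis transforms the canonical skew-symmetric r-matrix of the double into the r-matrix η J∧K₁ + (1/2)(J∧P₀ + K₂∧P₁ − K₁∧P₂) on g_{η²}. -/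
import Mathlib


open TensorProduct

/-- `x ∧ y = x ⊗ y − y ⊗ x`. -/
noncomputable def wedge {g : Type*} [AddCommGroup g] [Module ℝ g] (x y : g) :
    TensorProduct ℝ g g := x ⊗ₜ[ℝ] y - y ⊗ₜ[ℝ] x

/-- The Lie algebra isomorphism `ψ : g_{η²} → D(sl(2,ℝ))` transforms the
r-matrix `η J∧K₁ + (1/2)(J∧P₀ + K₂∧P₁ − K₁∧P₂)` into the canonical skew-symmetric
r-matrix `(1/2) Σᵢ (xⁱ⊗Xᵢ − Xᵢ⊗xⁱ)` of the double. -/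
theorem psi_transforms_r_matrix_standard_double
    (η : ℝ) (g : Type*) [LieRing g] [LieAlgebra ℝ g]
    (J P0 P1 P2 K1 K2 : g)
    (hind : LinearIndependent ℝ ![J, P0, P1, P2, K1, K2])
    (hspan : Submodule.span ℝ (Set.range ![J, P0, P1, P2, K1, K2]) = ⊤)
    (hJP1 : ⁅J, P1⁆ = P2) (hJP2 : ⁅J, P2⁆ = -P1)
    (hJK1 : ⁅J, K1⁆ = K2) (hJK2 : ⁅J, K2⁆ = -K1) (hJP0 : ⁅J, P0⁆ = 0)
    (hP1K1 : ⁅P1, K1⁆ = -P0) (hP2K2 : ⁅P2, K2⁆ = -P0)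
    (hP1K2 : ⁅P1, K2⁆ = 0) (hP2K1 : ⁅P2, K1⁆ = 0)
    (hP0K1 : ⁅P0, K1⁆ = -P1) (hP0K2 : ⁅P0, K2⁆ = -P2)
    (hK1K2 : ⁅K1, K2⁆ = -J)
    (hP0P1 : ⁅P0, P1⁆ = (η ^ 2) • K1) (hP0P2 : ⁅P0, P2⁆ = (η ^ 2) • K2)
    (hP1P2 : ⁅P1, P2⁆ = -((η ^ 2) • J))
    -- the double `D = D(sl(2,ℝ))` with basis `{X₀,X₁,X₂,x⁰,x¹,x²}`
    (D : Type*) [LieRing D] [LieAlgebra ℝ D]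
    (X0 X1 X2 x0 x1 x2 : D)
    (hindD : LinearIndependent ℝ ![X0, X1, X2, x0, x1, x2])
    (hX0X1 : ⁅X0, X1⁆ = (2 : ℝ) • X1) (hX0X2 : ⁅X0, X2⁆ = -((2 : ℝ) • X2))
    (hX1X2 : ⁅X1, X2⁆ = X0)
    (hx0x1 : ⁅x0, x1⁆ = -((η / 2) • x1)) (hx0x2 : ⁅x0, x2⁆ = -((η / 2) • x2))
    (hx1x2 : ⁅x1, x2⁆ = 0)
    (hx0X0 : ⁅x0, X0⁆ = 0) (hx0X1 : ⁅x0, X1⁆ = x2 + (η / 2) • X1)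
    (hx0X2 : ⁅x0, X2⁆ = -x1 + (η / 2) • X2)
    (hx1X0 : ⁅x1, X0⁆ = (2 : ℝ) • x1)
    (hx1X1 : ⁅x1, X1⁆ = -((2 : ℝ) • x0) - (η / 2) • X0)
    (hx1X2 : ⁅x1, X2⁆ = 0)
    (hx2X0 : ⁅x2, X0⁆ = -((2 : ℝ) • x2)) (hx2X1 : ⁅x2, X1⁆ = 0)
    (hx2X2 : ⁅x2, X2⁆ = (2 : ℝ) • x0 - (η / 2) • X0)
    -- the Lie algebra isomorphism ψ
    (ψ : g →ₗ[ℝ] D)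
    (hbij : Function.Bijective ψ)
    (hhom : ∀ u v : g, ψ ⁅u, v⁆ = ⁅ψ u, ψ v⁆)
    (hψJ : ψ J = -((1 / 2 : ℝ) • (X1 - X2)))
    (hψK1 : ψ K1 = (1 / 2 : ℝ) • (X1 + X2))
    (hψK2 : ψ K2 = -((1 / 2 : ℝ) • X0))
    (hψP0 : ψ P0 = -((η / 2) • (X1 + X2)) + x1 - x2)
    (hψP1 : ψ P1 = (2 : ℝ) • x0)
    (hψP2 : ψ P2 = (η / 2) • (X1 - X2) + x1 + x2) :
    TensorProduct.map ψ ψ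
        (η • wedge J K1 + (1 / 2 : ℝ) • (wedge J P0 + wedge K2 P1 - wedge K1 P2))
      = (1 / 2 : ℝ) • (wedge x0 X0 + wedge x1 X1 + wedge x2 X2) := by
  simp only [wedge, map_sub, map_add, map_smul, map_tmul, hψJ, hψK1, hψK2, hψP0, hψP1, hψP2,
    tmul_sub, sub_tmul, tmul_add, add_tmul, ← smul_tmul', tmul_smul, neg_tmul, tmul_neg,
    smul_add, smul_sub, smul_neg, smul_smul]
  module
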